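/- For a block upper triangular isomorphism of finite-dimensional real inner product spaces, given by the matrix ((f, h), (0, g)) : V₁ ⊕ V₂ → W₁ ⊕ W₂ with f : V₁ → W₁ and g : V₂ → W₂ isomorphisms and h : V₂ → W₁ arbitrary linear, one has [[((f,h),(0,g))]] = [[f]] + [[g]], where [[·]] := (1/2)·ln|det((·)* ∘ (·))| and the direct sums carry the orthogonal direct sum inner products. -/

import Mathlib

noncomputable section

/-- `[[f]] := (1/2) · ln |det (f* ∘ f)|` for a linear map between finite-dimensional
real inner product spaces. -/
def ldet {V W : Type} [NormedAddCommGroup V] [InnerProductSpace ℝ V] [FiniteDimensional ℝ V]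
    [NormedAddCommGroup W] [InnerProductSpace ℝ W] [FiniteDimensional ℝ W]
    (f : V →ₗ[ℝ] W) : ℝ :=
  (1 / 2) * Real.log |LinearMap.det ((LinearMap.adjoint f) ∘ₗ f)|

variable {V₁ V₂ W₁ W₂ : Type}
  [NormedAddCommGroup V₁] [InnerProductSpace ℝ V₁] [FiniteDimensional ℝ V₁]
  [NormedAddCommGroup V₂] [InnerProductSpace ℝ V₂] [FiniteDimensional ℝ V₂]
  [NormedAddCommGroup W₁] [InnerProductSpace ℝ W₁] [FiniteDimensional ℝ W₁]
  [NormedAddCommGroup W₂] [InnerProductSpace ℝ W₂] [FiniteDimensional ℝ W₂]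

instance : FiniteDimensional ℝ (WithLp 2 (V₁ × V₂)) :=
  LinearEquiv.finiteDimensional (WithLp.linearEquiv 2 ℝ (V₁ × V₂)).symm

instance : FiniteDimensional ℝ (WithLp 2 (W₁ × W₂)) :=
  LinearEquiv.finiteDimensional (WithLp.linearEquiv 2 ℝ (W₁ × W₂)).symm

/-- The block upper triangular map `((f, h), (0, g)) : V₁ ⊕ V₂ → W₁ ⊕ W₂`,
`(v₁, v₂) ↦ (f v₁ + h v₂, g v₂)`, on the orthogonal (`l²`) direct sums. -/
def blockMap (f : V₁ →ₗ[ℝ] W₁) (g : V₂ →ₗ[ℝ] W₂) (h : V₂ →ₗ[ℝ] W₁) :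
    WithLp 2 (V₁ × V₂) →ₗ[ℝ] WithLp 2 (W₁ × W₂) :=
  (WithLp.linearEquiv 2 ℝ (W₁ × W₂)).symm.toLinearMap ∘ₗ
    (LinearMap.prod
      (f ∘ₗ LinearMap.fst ℝ V₁ V₂ + h ∘ₗ LinearMap.snd ℝ V₁ V₂)
      (g ∘ₗ LinearMap.snd ℝ V₁ V₂)) ∘ₗ
    (WithLp.linearEquiv 2 ℝ (V₁ × V₂)).toLinearMap

/-!
`[[f]]` is the logarithm of `LinearMap.normDet f`, the absolute value of the determinant of the
matrix of `f` in orthonormal bases, whose square is `det (f* ∘ f)`. In the orthonormal bases of the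
direct sums built from bases of the summands, `blockMap f g h` has the block upper triangular
matrix `((F, H), (0, G))`, of determinant `det F · det G`. Bijectivity of `f` and `g` makes the
diagonal blocks square and their determinants nonzero, so the logarithm splits.
-/

open Module LinearMap

lemma ldet_eq_log_normDet {V W : Type} [NormedAddCommGroup V] [InnerProductSpace ℝ V]
    [FiniteDimensional ℝ V] [NormedAddCommGroup W] [InnerProductSpace ℝ W]
    [FiniteDimensional ℝ W] (f : V →ₗ[ℝ] W) : ldet f = Real.log f.normDet := by
  rw [ldet, ← f.normDet_sq]
  simp [Real.log_pow]

section

variable {E₁ E₂ F₁ F₂ : Type} [NormedAddCommGroup E₁] [InnerProductSpace ℝ E₁]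
  [NormedAddCommGroup E₂] [InnerProductSpace ℝ E₂] [NormedAddCommGroup F₁] [InnerProductSpace ℝ F₁]
  [NormedAddCommGroup F₂] [InnerProductSpace ℝ F₂]
  {ι₁ ι₂ κ₁ κ₂ : Type*} [Fintype ι₁] [Fintype ι₂] [Fintype κ₁] [Fintype κ₂]

lemma toMatrix_blockMap [DecidableEq ι₁] [DecidableEq ι₂]
    (b₁ : OrthonormalBasis ι₁ ℝ E₁) (b₂ : OrthonormalBasis ι₂ ℝ E₂)
    (c₁ : OrthonormalBasis κ₁ ℝ F₁) (c₂ : OrthonormalBasis κ₂ ℝ F₂)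
    (f : E₁ →ₗ[ℝ] F₁) (g : E₂ →ₗ[ℝ] F₂) (h : E₂ →ₗ[ℝ] F₁) :
    toMatrix (b₁.prod b₂).toBasis (c₁.prod c₂).toBasis (blockMap f g h) =
      Matrix.fromBlocks (toMatrix b₁.toBasis c₁.toBasis f) (toMatrix b₂.toBasis c₁.toBasis h) 0
        (toMatrix b₂.toBasis c₂.toBasis g) := by
  ext (i | i) (j | j) <;>
    simp [toMatrix_apply, blockMap, OrthonormalBasis.repr_apply_apply]

end

lemma normDet_blockMap (f : V₁ →ₗ[ℝ] W₁) (g : V₂ →ₗ[ℝ] W₂) (h : V₂ →ₗ[ℝ] W₁)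
    (h₁ : finrank ℝ V₁ = finrank ℝ W₁) (h₂ : finrank ℝ V₂ = finrank ℝ W₂) :
    (blockMap f g h).normDet = f.normDet * g.normDet := by
  let b₁ := stdOrthonormalBasis ℝ V₁
  let b₂ := stdOrthonormalBasis ℝ V₂
  let c₁ := (stdOrthonormalBasis ℝ W₁).reindex (finCongr h₁.symm)
  let c₂ := (stdOrthonormalBasis ℝ W₂).reindex (finCongr h₂.symm)
  rw [normDet_eq_norm_det_toMatrix _ (b₁.prod b₂) (c₁.prod c₂), toMatrix_blockMap,
    Matrix.det_fromBlocks_zero₂₁, norm_mul, ← normDet_eq_norm_det_toMatrix,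
    ← normDet_eq_norm_det_toMatrix]

/-- `[[((f,h),(0,g))]] = [[f]] + [[g]]` for a block upper triangular
isomorphism of orthogonal direct sums of finite-dimensional real inner product spaces. -/
theorem ldet_blockMap (f : V₁ →ₗ[ℝ] W₁) (g : V₂ →ₗ[ℝ] W₂) (h : V₂ →ₗ[ℝ] W₁)
    (hf : Function.Bijective f) (hg : Function.Bijective g) :
    ldet (blockMap f g h) = ldet f + ldet g := by
  have hf₀ : f.normDet ≠ 0 := (f.normDet_ne_zero_tfae.out 0 4).mpr hf.injective
  have hg₀ : g.normDet ≠ 0 := (g.normDet_ne_zero_tfae.out 0 4).mpr hg.injective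
  rw [ldet_eq_log_normDet, ldet_eq_log_normDet, ldet_eq_log_normDet,
    normDet_blockMap f g h (LinearEquiv.ofBijective f hf).finrank_eq
      (LinearEquiv.ofBijective g hg).finrank_eq,
    Real.log_mul hf₀ hg₀]
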